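/- arXiv:2006.03980 — 4 statements merged into one kernel-verified Lean document; each statement's English description precedes it below -/
import Mathlib

section
/- Let n, p \ge 1, \ell : \mathbb{R} \times \mathbb{R} \to \mathbb{R} a loss function, y \in \mathbb{R}^n, X \in \mathbb{R}^{n \times p}, \lambda > 0, and fix j \in \{1,\dots,p\}. Let \hat\beta(X, y; \lambda) be a minimizer over \mathbb{R}^p of \beta \mapsto \sum_{i=1}^n \ell(y_i, (X\beta)_i) + \lambda\|\beta\|_1, and suppose the reduced problem \gamma \mapsto \sum_{i=1}^n \ell(y_i, (X_{\bullet,-j}\gamma)_i) + \lambda\|\gamma\|_1 over \mathbb{R}^{p-1} has a unique minimizer \hat\beta(X_{\bullet,-j}, y; \lambda) (as is guaranteed when \ell is differentiable and strictly convex in its second argument and the columns of X are in general position). If \hat\beta_j(X, y; \lambda) = 0, then \hat\beta(X_{\bullet,-j}, y; \lambda) = \hat\beta_{-j}(X, y; \lambda), i.e., removing the inactive variable j from the regression does not change the fitted coefficient vector. -/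
open Finset

/-- Lemma 1 of the paper: if `βhat` minimizes the full L1-regularized
M-estimation objective and `βhat j = 0`, and the reduced problem (with column
`j` of the design removed) has a unique minimizer `γhat`, then `γhat` equals
`βhat` with coordinate `j` deleted. -/
theorem stmt_3 (n p : ℕ) (hn : 1 ≤ n) (ℓ : ℝ → ℝ → ℝ) (y : Fin n → ℝ)
    (X : Matrix (Fin n) (Fin (p + 1)) ℝ) (lam : ℝ) (hlam : 0 < lam)
    (j : Fin (p + 1)) (βhat : Fin (p + 1) → ℝ)
    (hmin : ∀ β : Fin (p + 1) → ℝ,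
      (∑ i, ℓ (y i) (∑ k, X i k * βhat k)) + lam * ∑ k, |βhat k| ≤
        (∑ i, ℓ (y i) (∑ k, X i k * β k)) + lam * ∑ k, |β k|)
    (γhat : Fin p → ℝ)
    (hγmin : ∀ γ : Fin p → ℝ,
      (∑ i, ℓ (y i) (∑ k, X i (j.succAbove k) * γhat k)) + lam * ∑ k, |γhat k| ≤
        (∑ i, ℓ (y i) (∑ k, X i (j.succAbove k) * γ k)) + lam * ∑ k, |γ k|)
    (hγunique : ∀ γ' : Fin p → ℝ,
      (∀ γ : Fin p → ℝ,
        (∑ i, ℓ (y i) (∑ k, X i (j.succAbove k) * γ' k)) + lam * ∑ k, |γ' k| ≤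
          (∑ i, ℓ (y i) (∑ k, X i (j.succAbove k) * γ k)) + lam * ∑ k, |γ k|) →
      γ' = γhat)
    (hj : βhat j = 0) :
    γhat = fun k => βhat (j.succAbove k) := by
  symm
  apply hγunique
  intro γ
  have key : ∀ v : Fin p → ℝ,
      (∑ i, ℓ (y i) (∑ k, X i k * Fin.insertNth (α := fun _ => ℝ) j 0 v k)) +
        lam * ∑ k, |Fin.insertNth (α := fun _ => ℝ) j 0 v k| =
      (∑ i, ℓ (y i) (∑ k, X i (j.succAbove k) * v k)) + lam * ∑ k, |v k| := by
    intro v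
    congr 1
    · refine Finset.sum_congr rfl fun i _ => ?_
      congr 1
      rw [Fin.sum_univ_succAbove (fun k => X i k * Fin.insertNth (α := fun _ => ℝ) j 0 v k) j]
      simp [Fin.insertNth_apply_same, Fin.insertNth_apply_succAbove]
    · congr 1
      rw [Fin.sum_univ_succAbove (fun k => |Fin.insertNth (α := fun _ => ℝ) j 0 v k|) j]
      simp [Fin.insertNth_apply_same, Fin.insertNth_apply_succAbove]
  have hβeq : βhat = Fin.insertNth (α := fun _ => ℝ) j 0 (fun k => βhat (j.succAbove k)) := by
    funext k
    rcases eq_or_ne k j with rfl | h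
    · rw [Fin.insertNth_apply_same, hj]
    · rcases Fin.exists_succAbove_eq h with ⟨m, rfl⟩
      rw [Fin.insertNth_apply_succAbove]
  calc (∑ i, ℓ (y i) (∑ k, X i (j.succAbove k) * βhat (j.succAbove k))) +
        lam * ∑ k, |βhat (j.succAbove k)|
      = (∑ i, ℓ (y i) (∑ k, X i k * βhat k)) + lam * ∑ k, |βhat k| := by
        conv_rhs => rw [hβeq]
        exact (key _).symm
    _ ≤ (∑ i, ℓ (y i) (∑ k, X i k * Fin.insertNth (α := fun _ => ℝ) j 0 γ k)) +
        lam * ∑ k, |Fin.insertNth (α := fun _ => ℝ) j 0 γ k| := hmin _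
    _ = _ := key γ
end

section
/- Fix n, p \ge 1, a design matrix X \in \mathbb{R}^{n \times p}, response y \in \mathbb{R}^n, a loss \ell : \mathbb{R} \times \mathbb{R} \to \mathbb{R}, a grid \lambda(1) > \lambda(2) > \cdots > \lambda(G) > 0, a partition \{1,\dots,n\} = D_1 \cup \cdots \cup D_K into disjoint folds, an integer \Delta \ge 1, and an index j \in \{1,\dots,p\}. For a sample subset I and a design matrix A (equal to X or to X with column j deleted), let \hat\beta(A_{I,\bullet}, y_I; \lambda) denote a minimizer of \beta \mapsto \sum_{i \in I} \ell(y_i, (A\beta)_i) + \lambda\|\beta\|_1, and assume that every such subproblem appearing below has a unique minimizer. Define the cross-validation errors \mathcal{E}_g = \sum_{k=1}^K \sum_{i \in D_k} \ell(y_i, X_{i,\bullet} \hat\beta(X_{-D_k,\bullet}, y_{-D_k}; \lambda(g))) and \mathcal{E}_{-j,g} analogously with column j of X removed everywhere. Let \hat g = \min\{g : \mathcal{E}_g \le \min(\mathcal{E}_{g+1},\dots,\mathcal{E}_{g+\Delta})\} (assumed to exist with \hat g + \Delta \le G) and \tilde g = \hat g + \Delta, and let \hat g_{-j} be defined in the same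 way from the sequence \mathcal{E}_{-j,\cdot}. Suppose that coordinate j satisfies: \hat\beta_j(X, y; \lambda(\hat g)) = 0, and \hat\beta_j(X_{-D_k,\bullet}, y_{-D_k}; \lambda(g)) = 0 for every fold k and every g \le \tilde g. Then \hat g_{-j} = \hat g, and \hat\beta(X_{\bullet,-j}, y; \lambda(\hat g)) = \hat\beta_{-j}(X, y; \lambda(\hat g)). -/
open Finset

/-- The L1-regularized M-estimation objective on the samples in `I`, with design
matrix `A`, responses `y`, loss `ℓ`, and penalty `lam`:
`∑_{i ∈ I} ℓ(y_i, (Aβ)_i) + lam * ‖β‖₁`. -/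
noncomputable def lassoObjective {n q : ℕ} (ℓ : ℝ → ℝ → ℝ) (y : Fin n → ℝ)
    (A : Matrix (Fin n) (Fin q) ℝ) (I : Finset (Fin n)) (lam : ℝ)
    (β : Fin q → ℝ) : ℝ :=
  (∑ i ∈ I, ℓ (y i) (∑ k, A i k * β k)) + lam * ∑ k, |β k|

/-- `β` is the unique global minimizer of `f`. -/
def IsUniqueMin {α : Type*} (f : α → ℝ) (β : α) : Prop :=
  (∀ β', f β ≤ f β') ∧ ∀ β', (∀ β'', f β' ≤ f β'') → β' = β


/-- Evaluating the full objective at the `insertNth j 0` extension equals the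
reduced objective. -/
lemma lassoObjective_insertNth {n p : ℕ} (ℓ : ℝ → ℝ → ℝ) (y : Fin n → ℝ)
    (A : Matrix (Fin n) (Fin (p + 1)) ℝ) (I : Finset (Fin n)) (lam : ℝ)
    (j : Fin (p + 1)) (γ : Fin p → ℝ) :
    lassoObjective ℓ y A I lam (j.insertNth 0 γ) =
      lassoObjective ℓ y (fun i c => A i (j.succAbove c)) I lam γ := by
  unfold lassoObjective
  congr 1
  · refine Finset.sum_congr rfl fun i _ => ?_
    congr 1
    rw [Fin.sum_univ_succAbove (fun k => A i k * (Fin.insertNth (α := fun _ => ℝ) j 0 γ) k) j]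
    simp [Fin.insertNth_apply_same, Fin.insertNth_apply_succAbove]
  · congr 1
    rw [Fin.sum_univ_succAbove (fun k => |(Fin.insertNth (α := fun _ => ℝ) j 0 γ) k|) j]
    simp [Fin.insertNth_apply_same, Fin.insertNth_apply_succAbove]

/-- If the unique full-design minimizer has `β j = 0`, then the unique
reduced-design minimizer is `β ∘ j.succAbove`. -/
lemma reduced_eq {n p : ℕ} (ℓ : ℝ → ℝ → ℝ) (y : Fin n → ℝ)
    (A : Matrix (Fin n) (Fin (p + 1)) ℝ) (I : Finset (Fin n)) (lam : ℝ)
    (j : Fin (p + 1)) (β : Fin (p + 1) → ℝ)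
    (hβ : IsUniqueMin (lassoObjective ℓ y A I lam) β) (hj : β j = 0)
    (γ : Fin p → ℝ)
    (hγ : IsUniqueMin (lassoObjective ℓ y (fun i c => A i (j.succAbove c)) I lam) γ) :
    γ = fun c => β (j.succAbove c) := by
  have hins : j.insertNth 0 (fun c => β (j.succAbove c)) = β := by
    rw [← hj]; exact Fin.insertNth_self_removeNth j β
  refine (hγ.2 (fun c => β (j.succAbove c)) fun δ => ?_).symm
  calc lassoObjective ℓ y (fun i c => A i (j.succAbove c)) I lam (fun c => β (j.succAbove c))
      = lassoObjective ℓ y A I lam β := by rw [← lassoObjective_insertNth, hins]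
    _ ≤ lassoObjective ℓ y A I lam (j.insertNth 0 δ) := hβ.1 _
    _ = _ := lassoObjective_insertNth ℓ y A I lam j δ

/-- Theorem 3 of the paper, for the "first local minimum with window `Δ`"
sequential cross-validation rule.  If variable `j` is inactive in the full-data
lasso at the selected penalty `λ(ĝ)` and in every fold-out lasso at every grid
point up to the stopping time `g̃ = ĝ + Δ`, then removing column `j` changes
neither the selected grid point nor the fitted coefficients. -/
theorem stmt_5 (n p G K Δ : ℕ) (hn : 1 ≤ n) (hΔ : 1 ≤ Δ)
    (X : Matrix (Fin n) (Fin (p + 1)) ℝ) (y : Fin n → ℝ) (ℓ : ℝ → ℝ → ℝ)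
    (lam : ℕ → ℝ)
    (hlampos : ∀ g, 1 ≤ g → g ≤ G → 0 < lam g)
    (hlamanti : ∀ g g', 1 ≤ g → g < g' → g' ≤ G → lam g' < lam g)
    (D : Fin K → Finset (Fin n))
    (hDdisj : ∀ k k' : Fin K, k ≠ k' → Disjoint (D k) (D k'))
    (hDcover : Finset.univ.biUnion D = (Finset.univ : Finset (Fin n)))
    (j : Fin (p + 1))
    -- the (assumed unique) fold-out minimizers for the full design
    (bfold : ℕ → Fin K → (Fin (p + 1) → ℝ))
    (hbfold : ∀ g, 1 ≤ g → g ≤ G → ∀ k : Fin K,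
      IsUniqueMin (lassoObjective ℓ y X (Finset.univ \ D k) (lam g)) (bfold g k))
    -- the (assumed unique) fold-out minimizers for the design with column j removed
    (bfoldj : ℕ → Fin K → (Fin p → ℝ))
    (hbfoldj : ∀ g, 1 ≤ g → g ≤ G → ∀ k : Fin K,
      IsUniqueMin
        (lassoObjective ℓ y (fun i c => X i (j.succAbove c)) (Finset.univ \ D k) (lam g))
        (bfoldj g k))
    -- the cross-validation error curves with and without column j
    (E Ej : ℕ → ℝ)
    (hE : ∀ g, E g = ∑ k : Fin K, ∑ i ∈ D k, ℓ (y i) (∑ c, X i c * bfold g k c))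
    (hEj : ∀ g, Ej g = ∑ k : Fin K, ∑ i ∈ D k,
      ℓ (y i) (∑ c, X i (j.succAbove c) * bfoldj g k c))
    -- the sequential rule: first grid point no worse than the following Δ points
    (ghat : ℕ)
    (hghat : IsLeast {g : ℕ | 1 ≤ g ∧ ∀ d ∈ Finset.Icc 1 Δ, E g ≤ E (g + d)} ghat)
    (hgG : ghat + Δ ≤ G)
    -- the (assumed unique) full-data minimizers at the selected penalty
    (bfull : Fin (p + 1) → ℝ)
    (hbfull : IsUniqueMin (lassoObjective ℓ y X Finset.univ (lam ghat)) bfull)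
    (bredfull : Fin p → ℝ)
    (hbredfull : IsUniqueMin
      (lassoObjective ℓ y (fun i c => X i (j.succAbove c)) Finset.univ (lam ghat)) bredfull)
    -- variable j is inactive
    (hj0 : bfull j = 0)
    (hjfold : ∀ k : Fin K, ∀ g, 1 ≤ g → g ≤ ghat + Δ → bfold g k j = 0) :
    IsLeast {g : ℕ | 1 ≤ g ∧ ∀ d ∈ Finset.Icc 1 Δ, Ej g ≤ Ej (g + d)} ghat ∧
      bredfull = fun c => bfull (j.succAbove c) := by
  have hfoldeq : ∀ g, 1 ≤ g → g ≤ ghat + Δ → ∀ k : Fin K,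
      bfoldj g k = fun c => bfold g k (j.succAbove c) := fun g h1 h2 k =>
    reduced_eq ℓ y X (Finset.univ \ D k) (lam g) j (bfold g k)
      (hbfold g h1 (h2.trans hgG) k) (hjfold k g h1 h2) (bfoldj g k)
      (hbfoldj g h1 (h2.trans hgG) k)
  have hEeq : ∀ g, 1 ≤ g → g ≤ ghat + Δ → Ej g = E g := by
    intro g h1 h2
    rw [hEj, hE]
    refine Finset.sum_congr rfl fun k _ => Finset.sum_congr rfl fun i _ => ?_
    rw [hfoldeq g h1 h2 k]
    congr 1
    rw [Fin.sum_univ_succAbove (fun c => X i c * bfold g k c) j, hjfold k g h1 h2]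
    ring
  obtain ⟨⟨hg1, hgloc⟩, hglb⟩ := hghat
  constructor
  · constructor
    · refine ⟨hg1, fun d hd => ?_⟩
      obtain ⟨hd1, hd2⟩ := Finset.mem_Icc.1 hd
      rw [hEeq ghat hg1 (Nat.le_add_right _ _),
        hEeq (ghat + d) (le_trans hg1 (Nat.le_add_right _ _)) (by omega)]
      exact hgloc d hd
    · intro g' ⟨hg'1, hg'loc⟩
      by_contra hlt
      push_neg at hlt
      refine absurd (hglb ⟨hg'1, fun d hd => ?_⟩) (by omega)
      obtain ⟨hd1, hd2⟩ := Finset.mem_Icc.1 hd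
      rw [← hEeq g' hg'1 (by omega), ← hEeq (g' + d) (by omega) (by omega)]
      exact hg'loc d hd
  · exact reduced_eq ℓ y X Finset.univ (lam ghat) j bfull hbfull hj0 bredfull hbredfull
end

section
/- Let (p_k)_{k \in K} be a family of positive reals indexed by a countable set K \subseteq \mathbb{N} with \sum_{k \in K} p_k = 1, and define the cumulative sums c_k = \sum_{j \in K, j \le k} p_j and c_k^- = \sum_{j \in K, j < k} p_j, so that the intervals [c_k^-, c_k] for k \in K partition [0,1] up to endpoints. Then the mixture measure \sum_{k \in K} p_k \cdot \mathrm{Unif}([c_k^-, c_k]), where \mathrm{Unif}([a,b]) is the uniform probability measure on [a,b], equals the uniform probability measure on [0,1]. -/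
open MeasureTheory Set Filter Topology Function

/-!
The interval `[c⁻ k, c k]` has length `p k`, so the weight `p k` cancels the normalisation of the
uniform law on it and the mixture is the sum of the restrictions of Lebesgue measure to these
intervals. Writing `S n` for the partial sums of `p` extended by zero outside `K`, the intervals are
`(S n, S (n + 1)]` (empty for `n ∉ K`, and the closed endpoints are null). For a monotone sequence
`S` tending to `s` these intervals are disjoint and cover `(S 0, s)`, so the sum is the restriction
to `[S 0, s] = [0, 1]`.
-/

section MonotoneSequence

variable {α : Type*} [LinearOrder α] [TopologicalSpace α] [OrderTopology α]
  {S : ℕ → α} {s : α}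

lemma Ioo_subset_iUnion_Ioc_succ_of_tendsto (hS : Tendsto S atTop (𝓝 s)) :
    Ioo (S 0) s ⊆ ⋃ n, Ioc (S n) (S (n + 1)) := by
  intro x hx
  obtain ⟨N, hN⟩ := (hS.eventually (eventually_gt_nhds hx.2)).exists
  obtain ⟨n, -, hn⟩ := mem_iUnion₂.1 (Ioc_subset_biUnion_Ioc N S ⟨hx.1, hN.le⟩)
  exact mem_iUnion.2 ⟨n, hn⟩

lemma Monotone.iUnion_Ioc_succ_subset_Icc (hS : Monotone S) (hlim : Tendsto S atTop (𝓝 s)) :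
    ⋃ n, Ioc (S n) (S (n + 1)) ⊆ Icc (S 0) s :=
  iUnion_subset fun n => Ioc_subset_Icc_self.trans
    (Icc_subset_Icc (hS n.zero_le) (hS.ge_of_tendsto hlim _))

lemma Monotone.sum_restrict_Ioc_succ [MeasurableSpace α] [OpensMeasurableSpace α]
    {μ : Measure α} [NullSingletonClass μ] (hS : Monotone S) (hlim : Tendsto S atTop (𝓝 s)) :
    Measure.sum (fun n => μ.restrict (Ioc (S n) (S (n + 1)))) = μ.restrict (Icc (S 0) s) := by
  have hdisj : Pairwise (Disjoint on fun n => Ioc (S n) (S (n + 1))) := by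
    simpa only [Order.succ_eq_add_one] using hS.pairwise_disjoint_on_Ioc_succ
  rw [← Measure.restrict_iUnion hdisj fun _ => measurableSet_Ioc]
  refine Measure.restrict_congr_set
    ((hS.iUnion_Ioc_succ_subset_Icc hlim).eventuallyLE.antisymm ?_)
  exact Ioo_ae_eq_Icc.symm.le.trans (Ioo_subset_iUnion_Ioc_succ_of_tendsto hlim).eventuallyLE

end MonotoneSequence

lemma MeasureTheory.Measure.sum_subtype_of_forall_notMem {ι α : Type*} [MeasurableSpace α]
    {f : ι → Measure α} {K : Set ι} (hf : ∀ i ∉ K, f i = 0) :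
    Measure.sum (fun i : K => f i) = Measure.sum f := by
  ext t ht
  rw [Measure.sum_apply _ ht, Measure.sum_apply _ ht]
  refine tsum_subtype_eq_of_support_subset (f := fun i => f i t) fun i hi => ?_
  by_contra hiK
  exact hi (by simp [hf i hiK])

lemma smul_inv_smul_restrict_Icc_eq_restrict_Ioc {α : Type*} [PartialOrder α]
    [MeasurableSpace α] {μ : Measure α} [NullSingletonClass μ] {a b : α} {r : ENNReal}
    (hr0 : r ≠ 0) (hrtop : r ≠ ⊤) :
    r • (r⁻¹ • μ.restrict (Icc a b)) = μ.restrict (Ioc a b) := by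
  rw [smul_smul, ENNReal.mul_inv_cancel hr0 hrtop, one_smul,
    Measure.restrict_congr_set Ioc_ae_eq_Icc]

/-- The crux of the discrete case of Lemma A1 of the paper: the mixture, with
weights `p k`, of the uniform distributions on the consecutive intervals
`[c⁻ k, c k]` (where `c⁻ k = ∑_{j ∈ K, j < k} p j` and
`c k = ∑_{j ∈ K, j ≤ k} p j`) is exactly the uniform distribution on `[0,1]`.
Here the uniform probability measure on `[a,b]` is `(b - a)⁻¹ • (volume restricted
to `[a,b]`). -/
theorem stmt_12 (K : Set ℕ) [DecidablePred (· ∈ K)] (p : ℕ → ℝ)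
    (hpos : ∀ k ∈ K, 0 < p k)
    (hsum : ∑' k : K, p (k : ℕ) = 1)
    (c cm : ℕ → ℝ)
    (hc : ∀ k, c k = ∑ j ∈ (Finset.range (k + 1)).filter (· ∈ K), p j)
    (hcm : ∀ k, cm k = ∑ j ∈ (Finset.range k).filter (· ∈ K), p j) :
    Measure.sum (fun k : K => ENNReal.ofReal (p (k : ℕ)) •
        ((ENNReal.ofReal (c (k : ℕ) - cm (k : ℕ)))⁻¹ •
          volume.restrict (Set.Icc (cm (k : ℕ)) (c (k : ℕ))))) =
      volume.restrict (Set.Icc (0 : ℝ) 1) := by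
  set S : ℕ → ℝ := fun n => ∑ j ∈ Finset.range n, K.indicator p j with hSdef
  have hS_succ : ∀ n, S (n + 1) = S n + K.indicator p n := fun n => Finset.sum_range_succ _ n
  have hcmS : ∀ k, cm k = S k := fun k => by
    simp [hcm, hSdef, Finset.sum_filter, indicator_apply]
  have hcS : ∀ k, c k = S (k + 1) := fun k => by
    simp [hc, hSdef, Finset.sum_filter, indicator_apply]
  have hS : Monotone S := monotone_nat_of_le_succ fun n => by
    rw [hS_succ]
    exact le_add_of_nonneg_right (indicator_nonneg (fun k hk => (hpos k hk).le) n)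
  -- `∑'` of a non-summable family is `0`, not `1`.
  have hsumm : Summable fun k : K => p k := by
    by_contra h
    simp [tsum_eq_zero_of_not_summable h] at hsum
  have hlim : Tendsto S atTop (𝓝 1) :=
    (hasSum_subtype_iff_indicator.1 (hsum ▸ hsumm.hasSum)).tendsto_sum_nat
  calc _ = Measure.sum (fun k : K => volume.restrict (Ioc (S k) (S (k + 1)))) := by
        congr 1; funext ⟨k, hk⟩
        rw [hcmS, hcS, hS_succ, add_sub_cancel_left, indicator_of_mem hk,
          smul_inv_smul_restrict_Icc_eq_restrict_Ioc (by simpa using hpos k hk)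
            ENNReal.ofReal_ne_top]
    _ = Measure.sum (fun n => volume.restrict (Ioc (S n) (S (n + 1)))) :=
        Measure.sum_subtype_of_forall_notMem
          (f := fun n => volume.restrict (Ioc (S n) (S (n + 1)))) fun n hn => by
          simp [hS_succ, indicator_of_notMem hn]
    _ = volume.restrict (Icc (S 0) 1) := hS.sum_restrict_Ioc_succ hlim
    _ = _ := by simp [hSdef]
end

section
/- Let \rho be a probability measure on E \times \mathbb{R} for a standard Borel space E (interpreted as the joint law of (Z, X)), and let F(z, \cdot) denote the conditional cumulative distribution function of X given Z = z (the conditional CDF of \rho). Suppose that for \rho-first-marginal-almost-every z, the function t \mapsto F(z, t) is continuous. Then, under \rho, the random variable (z, x) \mapsto F(z, x) is uniformly distributed on [0,1] and is independent of the first coordinate z; that is, the pushforward of \rho under the map (z, x) \mapsto (z, F(z, x)) equals the product of the first marginal of \rho with the uniform distribution on [0,1]. -/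
/-!
Disintegrate `ρ = ρ.fst ⊗ₘ κ`. Testing the defining identity of `F` against all measurable sets
shows that for `ρ.fst`-a.e. `z` the function `F z` agrees with the distribution function of `κ z`
at every rational, hence everywhere by right continuity. The probability integral transform then
says that `κ z` pushed forward by its continuous distribution function `F z` is uniform on `[0, 1]`.
Since this fibre law does not depend on `z`, the law of `(z, F z x)` is the product measure.
-/

open MeasureTheory ProbabilityTheory Set Filter Topology
open scoped ENNReal

theorem ofReal_ae_eq_of_forall_ofReal_setIntegral_eq {α : Type*} [MeasurableSpace α]
    {μ : Measure α} [IsFiniteMeasure μ] {h : α → ℝ} {f : α → ℝ≥0∞}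
    (hh : Measurable h) (hf : Measurable f)
    (heq : ∀ s, MeasurableSet s → ENNReal.ofReal (∫ x in s, h x ∂μ) = ∫⁻ x in s, f x ∂μ) :
    (fun x ↦ ENNReal.ofReal (h x)) =ᵐ[μ] f := by
  set N := {x | h x ≤ 0}
  set P : ℕ → Set α := fun n ↦ {x | 0 < h x ∧ h x ≤ n}
  have hN : MeasurableSet N := measurableSet_le hh measurable_const
  have hP n : MeasurableSet (P n) :=
    (measurableSet_lt measurable_const hh).inter (measurableSet_le hh measurable_const)
  have on_N : ∀ᵐ x ∂μ.restrict N, ENNReal.ofReal (h x) = f x := by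
    have hf0 : ∫⁻ x in N, f x ∂μ = 0 := by
      rw [← heq N hN, ENNReal.ofReal_eq_zero]
      exact setIntegral_nonpos hN fun x hx ↦ hx
    filter_upwards [(lintegral_eq_zero_iff hf).1 hf0, ae_restrict_mem hN] with x hfx hx
    rw [ENNReal.ofReal_eq_zero.2 hx, hfx, Pi.zero_apply]
  -- `h` need not be integrable; on `P n` it is bounded and nonnegative, so `ofReal` commutes
  -- with its integral.
  have on_P n : ∀ᵐ x ∂μ.restrict (P n), ENNReal.ofReal (h x) = f x := by
    refine ae_eq_of_forall_setLIntegral_eq_of_sigmaFinite (by fun_prop) hf fun s hs _ ↦ ?_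
    have hsP := hs.inter (hP n)
    have hint : IntegrableOn h (s ∩ P n) μ :=
      .of_bound (measure_lt_top μ _) hh.aestronglyMeasurable n <|
        (ae_restrict_iff' hsP).2 <| ae_of_all _ fun x hx ↦ by
          rw [Real.norm_of_nonneg hx.2.1.le]; exact hx.2.2
    rw [Measure.restrict_restrict hs, ← heq _ hsP, ofReal_integral_eq_lintegral_ofReal hint
      ((ae_restrict_iff' hsP).2 <| ae_of_all _ fun x hx ↦ hx.2.1.le)]
  have hcover : N ∪ ⋃ n, P n = univ := by
    refine eq_univ_of_forall fun x ↦ ?_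
    rcases le_or_gt (h x) 0 with hx | hx
    · exact .inl hx
    · obtain ⟨n, hn⟩ := exists_nat_ge (h x)
      exact .inr (mem_iUnion.2 ⟨n, hx, hn⟩)
  have := (ae_restrict_union_iff _ _ _).2 ⟨on_N, (ae_restrict_iUnion_iff _ _).2 on_P⟩
  rwa [hcover, Measure.restrict_univ] at this

theorem eq_of_eqOn_dense_of_continuousWithinAt_Ioi {α β : Type*} [TopologicalSpace α]
    [LinearOrder α] [OrderTopology α] [DenselyOrdered α] [NoMaxOrder α]
    [TopologicalSpace β] [T2Space β] {f g : α → β} {s : Set α} (hs : Dense s)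
    (hf : ∀ x, ContinuousWithinAt f (Ioi x) x) (hg : ∀ x, ContinuousWithinAt g (Ioi x) x)
    (hfg : EqOn f g s) : f = g := by
  funext x
  have : (𝓝[Ioi x ∩ s] x).NeBot := by
    rw [← mem_closure_iff_nhdsWithin_neBot]
    have := closure_mono (hs.open_subset_closure_inter (isOpen_Ioi (a := x)))
    rw [closure_closure, closure_Ioi] at this
    exact this self_mem_Ici
  refine tendsto_nhds_unique (l := 𝓝[Ioi x ∩ s] x) ((hf x).mono inter_subset_left).tendsto ?_
  exact ((hg x).mono inter_subset_left).tendsto.congr'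
    (eventually_nhdsWithin_of_forall fun y hy ↦ (hfg hy.2).symm)

theorem continuousWithinAt_Ioi_measure_Iic (μ : Measure ℝ) [IsProbabilityMeasure μ] (x : ℝ) :
    ContinuousWithinAt (fun y ↦ μ (Iic y)) (Ioi x) x := by
  simp_rw [← ofReal_cdf]
  exact ENNReal.continuous_ofReal.continuousAt.comp_continuousWithinAt
    (((cdf μ).right_continuous x).mono Ioi_subset_Ici_self)

theorem measure_cdf_le_of_mem_Ioo (μ : Measure ℝ) [IsProbabilityMeasure μ]
    (hcont : Continuous (cdf μ)) {u : ℝ} (hu : u ∈ Ioo 0 1) :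
    μ {x | cdf μ x ≤ u} = ENNReal.ofReal u := by
  set S := {x | cdf μ x ≤ u}
  have hne : S.Nonempty := ((tendsto_cdf_atBot μ).eventually (eventually_le_nhds hu.1)).exists
  have hbdd : BddAbove S := by
    obtain ⟨b, hb⟩ :=
      ((tendsto_cdf_atTop μ).eventually (eventually_gt_nhds hu.2)).exists_forall_of_atTop
    exact ⟨b, fun x hx ↦ le_of_not_gt fun hbx ↦ (hb x hbx.le).not_ge hx⟩
  set a := sSup S
  have haS : a ∈ S := (isClosed_le hcont continuous_const).csSup_mem hne hbdd
  have hS : S = Iic a :=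
    Subset.antisymm (fun x hx ↦ le_csSup hbdd hx) fun x hx ↦ (monotone_cdf μ hx).trans haS
  have ha : cdf μ a = u := by
    refine le_antisymm haS (ge_of_tendsto (hcont.continuousWithinAt (s := Ioi a)).tendsto ?_)
    filter_upwards [self_mem_nhdsWithin] with x hx
    exact (lt_of_not_ge fun hxS ↦ (not_le.2 hx) (le_csSup hbdd hxS)).le
  rw [hS, ← ofReal_cdf, ha]

theorem volume_restrict_Icc_Iic (u : ℝ) :
    volume.restrict (Icc (0 : ℝ) 1) (Iic u) = ENNReal.ofReal (min u 1) := by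
  have : Icc (0 : ℝ) 1 ∩ Iic u = Icc 0 (min u 1) := by
    ext x
    simp only [mem_inter_iff, mem_Icc, mem_Iic, le_min_iff]
    tauto
  rw [Measure.restrict_apply measurableSet_Iic, inter_comm, this, Real.volume_Icc, sub_zero]

theorem map_cdf_eq_volume_restrict_Icc (μ : Measure ℝ) [IsProbabilityMeasure μ]
    (hcont : Continuous (cdf μ)) : μ.map (cdf μ) = volume.restrict (Icc 0 1) := by
  have := Measure.isProbabilityMeasure_map (μ := μ) hcont.aemeasurable
  suffices h : (fun u ↦ μ.map (cdf μ) (Iic u)) = fun u ↦ ENNReal.ofReal (min u 1) from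
    Measure.ext_of_Iic _ _ fun u ↦ (congrFun h u).trans (volume_restrict_Icc_Iic u).symm
  have hmin : Continuous fun u : ℝ ↦ ENNReal.ofReal (min u 1) :=
    ENNReal.continuous_ofReal.comp (continuous_id.min continuous_const)
  -- The value at `u = 0` is not computed directly: right continuity supplies it.
  refine eq_of_eqOn_dense_of_continuousWithinAt_Ioi (dense_compl_singleton 0)
    (continuousWithinAt_Ioi_measure_Iic _) (fun _ ↦ hmin.continuousWithinAt) fun u hu ↦ ?_
  rw [Measure.map_apply hcont.measurable measurableSet_Iic]
  rcases lt_or_gt_of_ne hu with hu | hu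
  · have : cdf μ ⁻¹' Iic u = ∅ :=
      eq_empty_of_forall_notMem fun x hx ↦ (hu.trans_le (cdf_nonneg μ x)).not_ge hx
    rw [this, measure_empty, ENNReal.ofReal_of_nonpos ((min_le_left u 1).trans hu.le)]
  rcases lt_or_ge u 1 with hu1 | hu1
  · rw [min_eq_left hu1.le]
    exact measure_cdf_le_of_mem_Ioo μ hcont ⟨hu, hu1⟩
  · have : cdf μ ⁻¹' Iic u = univ :=
      eq_univ_of_forall fun x ↦ (cdf_le_one μ x).trans hu1
    rw [this, measure_univ, min_eq_right hu1, ENNReal.ofReal_one]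

theorem map_eq_volume_restrict_Icc_of_ofReal_eq_measure_Iic (μ : Measure ℝ)
    [IsProbabilityMeasure μ] {G : ℝ → ℝ} (hG : Continuous G)
    (hGμ : ∀ t, ENNReal.ofReal (G t) = μ (Iic t)) :
    μ.map G = volume.restrict (Icc 0 1) := by
  have hcdf : ⇑(cdf μ) = fun t ↦ max (G t) 0 := funext fun t ↦ by
    rw [cdf_eq_real, measureReal_def, ← hGμ, ENNReal.toReal_ofReal']
  have hcont : Continuous (cdf μ) := hcdf ▸ hG.max continuous_const
  have hnull : μ (cdf μ ⁻¹' Iic 0) = 0 := by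
    rw [← Measure.map_apply hcont.measurable measurableSet_Iic,
      map_cdf_eq_volume_restrict_Icc μ hcont, volume_restrict_Icc_Iic, min_eq_left zero_le_one,
      ENNReal.ofReal_zero]
  -- `G` and `cdf μ` differ only where `cdf μ` vanishes, a null set.
  have hae : G =ᵐ[μ] cdf μ := by
    filter_upwards [measure_eq_zero_iff_ae_notMem.1 hnull] with x hx
    rw [hcdf]
    refine (max_eq_left (le_of_not_gt fun hneg ↦ hx ?_)).symm
    simp [hcdf, hneg.le]
  rw [Measure.map_congr hae, map_cdf_eq_volume_restrict_Icc μ hcont]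

theorem map_compProd_eq_prod_of_ae_map_eq {α β γ : Type*} [MeasurableSpace α]
    [MeasurableSpace β] [MeasurableSpace γ] {μ : Measure α} [SigmaFinite μ] {κ : Kernel α β}
    [IsSFiniteKernel κ] {ν : Measure γ} [SigmaFinite ν] {g : α → β → γ}
    (hg : Measurable fun p : α × β ↦ g p.1 p.2) (hκ : ∀ᵐ a ∂μ, (κ a).map (g a) = ν) :
    (μ ⊗ₘ κ).map (fun p ↦ (p.1, g p.1 p.2)) = μ.prod ν := by
  have hT : Measurable fun p : α × β ↦ (p.1, g p.1 p.2) := measurable_fst.prodMk hg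
  refine (Measure.prod_eq fun s t hs ht ↦ ?_).symm
  have hst := hs.prod ht
  rw [Measure.map_apply hT hst, Measure.compProd_apply (hT hst)]
  calc ∫⁻ a, κ a (Prod.mk a ⁻¹' ((fun p ↦ (p.1, g p.1 p.2)) ⁻¹' s ×ˢ t)) ∂μ
      = ∫⁻ a, s.indicator (fun _ ↦ ν t) a ∂μ := by
        refine lintegral_congr_ae ?_
        filter_upwards [hκ] with a ha
        by_cases has : a ∈ s
        · have hga : Measurable (g a) := hg.comp measurable_prodMk_left
          rw [indicator_of_mem has, ← ha, Measure.map_apply hga ht]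
          congr 1
          ext b
          simp [has]
        · rw [indicator_of_notMem has]
          convert measure_empty (μ := κ a)
          ext b
          simp [has]
    _ = μ s * ν t := by rw [lintegral_indicator_const hs, mul_comm]

theorem ae_forall_ofReal_eq_condKernel_Iic {E : Type*} [MeasurableSpace E]
    (ρ : Measure (E × ℝ)) [IsFiniteMeasure ρ] {F : E → ℝ → ℝ}
    (hFmeas : Measurable fun q : E × ℝ ↦ F q.1 q.2)
    (hFdef : ∀ A, MeasurableSet A → ∀ t,
      ρ (A ×ˢ Iic t) = ENNReal.ofReal (∫ z in A, F z t ∂ρ.fst))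
    (hFcont : ∀ᵐ z ∂ρ.fst, Continuous (F z)) :
    ∀ᵐ z ∂ρ.fst, ∀ t, ENNReal.ofReal (F z t) = ρ.condKernel z (Iic t) := by
  have hrat (q : ℚ) : ∀ᵐ z ∂ρ.fst, ENNReal.ofReal (F z q) = ρ.condKernel z (Iic q) :=
    ofReal_ae_eq_of_forall_ofReal_setIntegral_eq
      (hFmeas.comp (measurable_id.prodMk measurable_const))
      (ρ.condKernel.measurable_coe measurableSet_Iic) fun A hA ↦ by
        rw [← hFdef A hA, ← Measure.compProd_apply_prod hA measurableSet_Iic,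
          ρ.disintegrate ρ.condKernel]
  filter_upwards [hFcont, ae_all_iff.2 hrat] with z hcont hz
  refine congrFun (eq_of_eqOn_dense_of_continuousWithinAt_Ioi Rat.denseRange_cast
    (fun _ ↦ (ENNReal.continuous_ofReal.comp hcont).continuousWithinAt)
    (continuousWithinAt_Ioi_measure_Iic _) ?_)
  rintro _ ⟨q, rfl⟩
  exact hz q

theorem stmt_13_general {E : Type*} [MeasurableSpace E]
    (ρ : Measure (E × ℝ)) [IsProbabilityMeasure ρ]
    (F : E → ℝ → ℝ)
    (hFmeas : Measurable (fun q : E × ℝ => F q.1 q.2))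
    (hFdef : ∀ (A : Set E), MeasurableSet A → ∀ t : ℝ,
      ρ (A ×ˢ Set.Iic t) = ENNReal.ofReal (∫ z in A, F z t ∂ρ.fst))
    (hFcont : ∀ᵐ z ∂ρ.fst, Continuous (F z)) :
    Measure.map (fun q : E × ℝ => (q.1, F q.1 q.2)) ρ =
      (ρ.fst).prod (volume.restrict (Set.Icc (0 : ℝ) 1)) := by
  have hunif : ∀ᵐ z ∂ρ.fst, (ρ.condKernel z).map (F z) = volume.restrict (Icc 0 1) := by
    filter_upwards [hFcont, ae_forall_ofReal_eq_condKernel_Iic ρ hFmeas hFdef hFcont]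
      with z hcont hz
    exact map_eq_volume_restrict_Icc_of_ofReal_eq_measure_Iic _ hcont hz
  rw [← ρ.disintegrate ρ.condKernel, Measure.fst_compProd]
  exact map_compProd_eq_prod_of_ae_map_eq hFmeas hunif

/-- Parts (ii) and (iii) of Lemma A1 of the paper (continuous case): if `ρ` is
the joint law of `(Z, X)` on `E × ℝ`, `F z` is the conditional CDF of `X` given
`Z = z` (i.e. `ρ(A × (-∞, t]) = ∫_A F z t dρ₁(z)` for all measurable `A` and
all `t`), and `F z` is continuous for `ρ₁`-a.e. `z`, then `V = F Z X` is
uniformly distributed on `[0,1]` and independent of `Z`: the law of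
`(Z, F Z X)` is the product of `ρ₁` with the uniform distribution on `[0,1]`. -/
theorem stmt_13 {E : Type*} [MeasurableSpace E] [StandardBorelSpace E]
    (ρ : Measure (E × ℝ)) [IsProbabilityMeasure ρ]
    (F : E → ℝ → ℝ)
    (hFmeas : Measurable (fun q : E × ℝ => F q.1 q.2))
    (hFdef : ∀ (A : Set E), MeasurableSet A → ∀ t : ℝ,
      ρ (A ×ˢ Set.Iic t) = ENNReal.ofReal (∫ z in A, F z t ∂ρ.fst))
    (hFcont : ∀ᵐ z ∂ρ.fst, Continuous (F z)) :
    Measure.map (fun q : E × ℝ => (q.1, F q.1 q.2)) ρ =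
      (ρ.fst).prod (volume.restrict (Set.Icc (0 : ℝ) 1)) :=
  stmt_13_general ρ F hFmeas hFdef hFcont
end
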